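/- Let 0 < ε ≤ 1/3, let a₀ > 0, and let Q and Q₀ be 3×3 real symmetric traceless matrices with λ_min(Q) ≥ −1/3 + ε and λ_min(Q₀) ≥ −1/3 + ε. Set L = a₀(Q + (1/3)I), L₀ = a₀(Q₀ + (1/3)I), and for any 3×3 real matrix F set G = L^{-1/2} F L₀^{1/2}. Then |G| ≥ √ε · |F|. -/

import Mathlib

open Matrix

/-- Frobenius norm of a 3×3 real matrix: |M| = √(tr(Mᵀ M)). -/
noncomputable def frobNorm (M : Matrix (Fin 3) (Fin 3) ℝ) : ℝ :=
  Real.sqrt (Matrix.trace (Mᵀ * M))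

/-- Smallest eigenvalue of a symmetric (Hermitian) real matrix. -/
noncomputable def lMin {M : Matrix (Fin 3) (Fin 3) ℝ} (h : M.IsHermitian) : ℝ :=
  ⨅ i, h.eigenvalues i

/-- Largest eigenvalue of a symmetric (Hermitian) real matrix. -/
noncomputable def lMax {M : Matrix (Fin 3) (Fin 3) ℝ} (h : M.IsHermitian) : ℝ :=
  ⨆ i, h.eigenvalues i

/-- The unique symmetric positive (semi)definite square root of a positive definite matrix. -/
noncomputable def msqrt {M : Matrix (Fin 3) (Fin 3) ℝ} (h : M.PosDef) : Matrix (Fin 3) (Fin 3) ℝ :=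
  (h.posSemidef.1.eigenvectorUnitary : Matrix (Fin 3) (Fin 3) ℝ) *
    diagonal ((↑) ∘ (√·) ∘ h.posSemidef.1.eigenvalues) *
    (star h.posSemidef.1.eigenvectorUnitary : Matrix (Fin 3) (Fin 3) ℝ)

/-!
Write `S = L^{1/2}` and `S₀ = L₀^{1/2}`, so that `S G = F S₀`. The eigenvalues of `Q` are at
least `-1/3` and sum to `0`, hence are at most `2/3`, so `L ≤ a₀ I`; similarly `L₀ ≥ a₀ ε I`.
Conjugating these Loewner inequalities and taking traces gives
`a₀ ε |F|² ≤ |F S₀|² = |S G|² ≤ a₀ |G|²`.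
-/

open scoped MatrixOrder

namespace Matrix

variable {n m : Type*} [Fintype n] [Fintype m] [DecidableEq n]

theorem IsHermitian.posSemidef_smul_add_smul_one {A : Matrix n n ℝ} (hA : A.IsHermitian)
    {a b : ℝ} (h : ∀ i, 0 ≤ a * hA.eigenvalues i + b) : (a • A + b • 1).PosSemidef := by
  have hspec : a • A + b • 1 = cfc (fun x ↦ a * x + b) A := by
    rw [cfc_add .., cfc_const_mul .., cfc_id' .., cfc_const ..,
      Algebra.algebraMap_eq_smul_one]
  rw [hspec, ← nonneg_iff_posSemidef]
  refine cfc_nonneg fun x hx ↦ ?_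
  obtain ⟨i, rfl⟩ := hA.spectrum_real_eq_range_eigenvalues ▸ hx
  exact h i

theorem IsHermitian.eigenvalues_le_of_trace_eq_zero {A : Matrix n n ℝ} (hA : A.IsHermitian)
    (htr : A.trace = 0) {c : ℝ} (hc : ∀ j, c ≤ hA.eigenvalues j) (i : n) :
    hA.eigenvalues i ≤ -((Fintype.card n - 1) * c) := by
  have hsum : hA.eigenvalues i + ∑ j ∈ Finset.univ.erase i, hA.eigenvalues j = 0 := by
    rw [Finset.add_sum_erase _ _ (Finset.mem_univ i), ← htr, hA.trace_eq_sum_eigenvalues]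
    simp
  have hrest : (Fintype.card n - 1) * c ≤ ∑ j ∈ Finset.univ.erase i, hA.eigenvalues j := by
    have : Nonempty n := ⟨i⟩
    have := Finset.card_nsmul_le_sum (Finset.univ.erase i) _ c fun j _ ↦ hc j
    rwa [Finset.card_erase_of_mem (Finset.mem_univ i), nsmul_eq_mul, Finset.card_univ,
      Nat.cast_pred Fintype.card_pos] at this
  linarith

theorem trace_transpose_mul_mul_le {A : Matrix n n ℝ} {c : ℝ} (h : (c • 1 - A).PosSemidef)
    (B : Matrix n m ℝ) : (Bᵀ * A * B).trace ≤ c * (Bᵀ * B).trace := by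
  have := (h.conjTranspose_mul_mul_same B).trace_nonneg
  rw [conjTranspose_eq_transpose_of_trivial, Matrix.mul_sub, Matrix.sub_mul, trace_sub,
    Matrix.mul_smul, Matrix.smul_mul, Matrix.mul_one, trace_smul, smul_eq_mul] at this
  linarith

theorem le_trace_transpose_mul_mul {A : Matrix n n ℝ} {c : ℝ} (h : (A - c • 1).PosSemidef)
    (B : Matrix n m ℝ) : c * (Bᵀ * B).trace ≤ (Bᵀ * A * B).trace := by
  have := (h.conjTranspose_mul_mul_same B).trace_nonneg
  rw [conjTranspose_eq_transpose_of_trivial, Matrix.mul_sub, Matrix.sub_mul, trace_sub,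
    Matrix.mul_smul, Matrix.smul_mul, Matrix.mul_one, trace_smul, smul_eq_mul] at this
  linarith

end Matrix

theorem le_lMin_iff {M : Matrix (Fin 3) (Fin 3) ℝ} (h : M.IsHermitian) {c : ℝ} :
    c ≤ lMin h ↔ ∀ i, c ≤ h.eigenvalues i :=
  le_ciInf_iff (Finite.bddBelow_range _)

theorem msqrt_eq_sqrt {M : Matrix (Fin 3) (Fin 3) ℝ} (h : M.PosDef) : msqrt h = CFC.sqrt M := by
  rw [CFC.sqrt_eq_real_sqrt M h.posSemidef.nonneg, cfcₙ_eq_cfc, h.isHermitian.cfc_eq]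
  rfl

theorem msqrt_mul_self {M : Matrix (Fin 3) (Fin 3) ℝ} (h : M.PosDef) : msqrt h * msqrt h = M := by
  rw [msqrt_eq_sqrt, CFC.sqrt_mul_sqrt_self M h.posSemidef.nonneg]

theorem transpose_msqrt {M : Matrix (Fin 3) (Fin 3) ℝ} (h : M.PosDef) :
    (msqrt h)ᵀ = msqrt h := by
  rw [msqrt_eq_sqrt, ← conjTranspose_eq_transpose_of_trivial]
  exact (nonneg_iff_posSemidef.mp (CFC.sqrt_nonneg M)).isHermitian

theorem isUnit_msqrt {M : Matrix (Fin 3) (Fin 3) ℝ} (h : M.PosDef) : IsUnit (msqrt h) :=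
  isUnit_of_mul_isUnit_left ((msqrt_mul_self h).symm ▸ h.isUnit)

theorem sq_frobNorm (M : Matrix (Fin 3) (Fin 3) ℝ) : frobNorm M ^ 2 = (Mᵀ * M).trace :=
  Real.sq_sqrt (posSemidef_conjTranspose_mul_self M).trace_nonneg

theorem frobNorm_transpose (M : Matrix (Fin 3) (Fin 3) ℝ) : frobNorm Mᵀ = frobNorm M := by
  rw [frobNorm, frobNorm, transpose_transpose, trace_mul_comm]

theorem sq_frobNorm_mul_le {S : Matrix (Fin 3) (Fin 3) ℝ} {c : ℝ}
    (h : (c • 1 - Sᵀ * S).PosSemidef) (Y : Matrix (Fin 3) (Fin 3) ℝ) :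
    frobNorm (S * Y) ^ 2 ≤ c * frobNorm Y ^ 2 := by
  rw [sq_frobNorm, sq_frobNorm]
  simpa only [transpose_mul, Matrix.mul_assoc] using trace_transpose_mul_mul_le h Y

theorem le_sq_frobNorm_mul {S : Matrix (Fin 3) (Fin 3) ℝ} {c : ℝ}
    (h : (S * Sᵀ - c • 1).PosSemidef) (X : Matrix (Fin 3) (Fin 3) ℝ) :
    c * frobNorm X ^ 2 ≤ frobNorm (X * S) ^ 2 := by
  rw [← frobNorm_transpose X, ← frobNorm_transpose (X * S), sq_frobNorm, sq_frobNorm]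
  simpa only [transpose_mul, transpose_transpose, Matrix.mul_assoc]
    using le_trace_transpose_mul_mul h Xᵀ

theorem stmt8_general (ε a0 : ℝ) (hε : 0 < ε) (ha0 : 0 < a0)
    (Q Q0 L L0 F : Matrix (Fin 3) (Fin 3) ℝ)
    (hQ : Q.IsHermitian) (htrQ : Q.trace = 0) (hminQ : -1 / 3 + ε ≤ lMin hQ)
    (hQ0 : Q0.IsHermitian) (hminQ0 : -1 / 3 + ε ≤ lMin hQ0)
    (hLdef : L = a0 • (Q + (1 / 3 : ℝ) • (1 : Matrix (Fin 3) (Fin 3) ℝ)))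
    (hL0def : L0 = a0 • (Q0 + (1 / 3 : ℝ) • (1 : Matrix (Fin 3) (Fin 3) ℝ)))
    (hL : L.PosDef) (hL0 : L0.PosDef) :
    Real.sqrt ε * frobNorm F ≤ frobNorm ((msqrt hL)⁻¹ * F * msqrt hL0) := by
  set S := msqrt hL
  set S0 := msqrt hL0
  set G := S⁻¹ * F * S0
  have hL_le : (a0 • 1 - Sᵀ * S).PosSemidef := by
    have hQ_le := hQ.eigenvalues_le_of_trace_eq_zero htrQ ((le_lMin_iff hQ).mp hminQ)
    rw [transpose_msqrt, msqrt_mul_self, hLdef]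
    convert hQ.posSemidef_smul_add_smul_one (a := -a0) (b := 2 / 3 * a0) fun i ↦ ?_ using 1
    · module
    · have := hQ_le i
      simp only [Fintype.card_fin] at this
      nlinarith
  have hL0_ge : (S0 * S0ᵀ - (a0 * ε) • 1).PosSemidef := by
    rw [transpose_msqrt, msqrt_mul_self, hL0def]
    convert hQ0.posSemidef_smul_add_smul_one (a := a0) (b := a0 * (1 / 3 - ε)) fun i ↦ ?_ using 1
    · module
    · have := (le_lMin_iff hQ0).mp hminQ0 i
      nlinarith
  have hSG : S * G = F * S0 := by
    simp only [G, Matrix.mul_assoc]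
    exact mul_nonsing_inv_cancel_left _ _ ((isUnit_iff_isUnit_det _).mp (isUnit_msqrt hL))
  have hsq : ε * frobNorm F ^ 2 ≤ frobNorm G ^ 2 := by
    have := (le_sq_frobNorm_mul hL0_ge F).trans (hSG ▸ sq_frobNorm_mul_le hL_le G)
    exact le_of_mul_le_mul_left (by simpa only [mul_assoc] using this) ha0
  refine (pow_le_pow_iff_left₀ (mul_nonneg (Real.sqrt_nonneg _) (Real.sqrt_nonneg _))
    (Real.sqrt_nonneg _) two_ne_zero).mp ?_
  rwa [mul_pow, Real.sq_sqrt hε.le]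

theorem stmt8 (ε a0 : ℝ) (hε : 0 < ε) (hε3 : ε ≤ 1 / 3) (ha0 : 0 < a0)
    (Q Q0 L L0 F : Matrix (Fin 3) (Fin 3) ℝ)
    (hQ : Q.IsHermitian) (htrQ : Q.trace = 0) (hminQ : -1 / 3 + ε ≤ lMin hQ)
    (hQ0 : Q0.IsHermitian) (htrQ0 : Q0.trace = 0) (hminQ0 : -1 / 3 + ε ≤ lMin hQ0)
    (hLdef : L = a0 • (Q + (1 / 3 : ℝ) • (1 : Matrix (Fin 3) (Fin 3) ℝ)))
    (hL0def : L0 = a0 • (Q0 + (1 / 3 : ℝ) • (1 : Matrix (Fin 3) (Fin 3) ℝ)))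
    (hL : L.PosDef) (hL0 : L0.PosDef) :
    Real.sqrt ε * frobNorm F ≤ frobNorm ((msqrt hL)⁻¹ * F * msqrt hL0) :=
  stmt8_general ε a0 hε ha0 Q Q0 L L0 F hQ htrQ hminQ hQ0 hminQ0 hLdef hL0def hL hL0
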